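/- arXiv:2411.06859 — 2 statements merged into one kernel-verified Lean document; each statement's English description precedes it below -/
import Mathlib

section
/- For every triple (a,b,c) ∈ F³ over an algebraically closed field F, there exist matrices A, B ∈ SL(2,F) with tr(A) = a, tr(B) = b, and tr(AB) = c. Moreover, any such pair (A,B) has a common invariant 1-dimensional subspace if and only if a² + b² + c² − abc = 4. -/
open Matrix

abbrev SL2 (F : Type*) [Field F] := Matrix.SpecialLinearGroup (Fin 2) F

def tr {F : Type*} [Field F] (A : SL2 F) : F :=
  Matrix.trace (A : Matrix (Fin 2) (Fin 2) F)

def eigVec {F : Type*} [Field F] (A : SL2 F) (v : Fin 2 → F) : Prop :=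
  ∃ c : F, (A : Matrix (Fin 2) (Fin 2) F).mulVec v = c • v

/-- `A` and `B` have a common invariant 1-dimensional subspace of `F²`,
i.e. a common eigenvector. -/
def HasCommonEigenvector {F : Type*} [Field F] (A B : SL2 F) : Prop :=
  ∃ v : Fin 2 → F, v ≠ 0 ∧ eigVec A v ∧ eigVec B v

/-!
For `A, B ∈ SL(2, F)` with traces `a, b, c` of `A, B, AB`, a direct computation gives
`det (AB - BA) = 4 - (a² + b² + c² - abc)`. A common eigenvector is killed by `AB - BA`, so
reducibility forces this determinant to vanish. Conversely, if `AB - BA` is singular: either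
`A` and `B` commute, and then an eigenspace of one is invariant under the other; or `AB - BA` is
a nonzero singular matrix, and Cayley–Hamilton (`A (AB - BA) + (AB - BA) A = tr A • (AB - BA)`)
shows that its kernel, a line, is invariant under `A` and `B`.
Every triple is realized by `A = !![a, -1; 1, 0]`, `B = !![0, x; x - c, b]` with
`x² - c x + 1 = 0`.
-/

namespace Matrix

variable {F : Type*} [Field F]

theorem det_commutator_fin_two (A B : Matrix (Fin 2) (Fin 2) F) :
    (A * B - B * A).det = 4 * A.det * B.det - A.trace ^ 2 * B.det - B.trace ^ 2 * A.det
      - (A * B).trace ^ 2 + A.trace * B.trace * (A * B).trace := by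
  simp only [det_fin_two, trace_fin_two, mul_apply, Fin.sum_univ_two, Matrix.sub_apply]
  ring

theorem mul_self_fin_two (A : Matrix (Fin 2) (Fin 2) F) : A * A = A.trace • A - A.det • 1 := by
  ext i j
  fin_cases i <;> fin_cases j <;> simp [mul_apply, trace_fin_two, det_fin_two] <;> ring

theorem commutator_mulVec_mulVec_eq_zero_fin_two (A B : Matrix (Fin 2) (Fin 2) F)
    {v : Fin 2 → F} (hv : (A * B - B * A) *ᵥ v = 0) : (A * B - B * A) *ᵥ (A *ᵥ v) = 0 := by
  have anticomm : (A * B - B * A) * A = A.trace • (A * B - B * A) - A * (A * B - B * A) := by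
    rw [eq_sub_iff_add_eq]
    calc (A * B - B * A) * A + A * (A * B - B * A) = A * A * B - B * (A * A) := by noncomm_ring
      _ = A.trace • (A * B - B * A) := by
        rw [mul_self_fin_two]
        simp only [Matrix.sub_mul, Matrix.mul_sub, Matrix.smul_mul, Matrix.mul_smul, one_mul,
          mul_one, smul_sub]
        abel
  rw [mulVec_mulVec, anticomm, sub_mulVec, smul_mulVec, ← mulVec_mulVec, hv, mulVec_zero,
    smul_zero, sub_zero]

theorem exists_smul_eq_of_mulVec_eq_zero_fin_two {M : Matrix (Fin 2) (Fin 2) F} (hM : M ≠ 0)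
    {v w : Fin 2 → F} (hv : v ≠ 0) (hMv : M *ᵥ v = 0) (hMw : M *ᵥ w = 0) : ∃ c : F, c • v = w := by
  have hrange : Module.finrank F (LinearMap.range (toLin' M)) ≠ 0 := by
    rwa [Ne, Submodule.finrank_eq_zero, LinearMap.range_eq_bot, LinearEquiv.map_eq_zero_iff]
  have hker : Module.finrank F (LinearMap.ker (toLin' M)) = 1 := by
    have hnz : Module.finrank F (LinearMap.ker (toLin' M)) ≠ 0 := by
      rw [Ne, Submodule.finrank_eq_zero, Submodule.eq_bot_iff]
      exact fun h => hv (h v (by simpa using hMv))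
    have := LinearMap.finrank_range_add_finrank_ker (toLin' M)
    rw [Module.finrank_fin_fun] at this
    omega
  obtain ⟨c, hc⟩ := exists_smul_eq_of_finrank_eq_one hker
    (x := ⟨v, by simpa using hMv⟩) (by simpa using hv) ⟨w, by simpa using hMw⟩
  exact ⟨c, congrArg Subtype.val hc⟩

theorem det_commutator_eq_zero_of_common_eigenvector {A B : Matrix (Fin 2) (Fin 2) F}
    {v : Fin 2 → F} (hv : v ≠ 0) {l m : F} (hAv : A *ᵥ v = l • v) (hBv : B *ᵥ v = m • v) :
    (A * B - B * A).det = 0 :=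
  exists_mulVec_eq_zero_iff.mp ⟨v, hv, by
    rw [sub_mulVec, ← mulVec_mulVec, ← mulVec_mulVec, hAv, hBv, mulVec_smul, mulVec_smul, hAv, hBv,
      smul_smul, smul_smul, mul_comm, sub_self]⟩

variable [IsAlgClosed F]

theorem exists_mulVec_eq_smul (A : Matrix (Fin 2) (Fin 2) F) :
    ∃ (l : F) (v : Fin 2 → F), v ≠ 0 ∧ A *ᵥ v = l • v := by
  obtain ⟨l, hl⟩ := Module.End.exists_eigenvalue (toLin' A)
  obtain ⟨v, hv⟩ := hl.exists_hasEigenvector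
  exact ⟨l, v, hv.right, by simpa using hv.apply_eq_smul⟩

theorem exists_common_eigenvector_of_commute {A B : Matrix (Fin 2) (Fin 2) F} (h : Commute A B) :
    ∃ v : Fin 2 → F, v ≠ 0 ∧ (∃ c : F, A *ᵥ v = c • v) ∧ ∃ c : F, B *ᵥ v = c • v := by
  obtain ⟨l, v, hv, hAv⟩ := exists_mulVec_eq_smul A
  by_cases hscalar : A - l • 1 = 0
  · obtain ⟨m, w, hw, hBw⟩ := exists_mulVec_eq_smul B
    refine ⟨w, hw, ⟨l, ?_⟩, ⟨m, hBw⟩⟩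
    rw [sub_eq_zero.mp hscalar, smul_mulVec, one_mulVec]
  · have hker : (A - l • 1) *ᵥ v = 0 := by
      rw [sub_mulVec, smul_mulVec, one_mulVec, hAv, sub_self]
    have hBker : (A - l • 1) *ᵥ (B *ᵥ v) = 0 := by
      rw [mulVec_mulVec, (h.sub_left (Commute.one_left B |>.smul_left l)).eq, ← mulVec_mulVec,
        hker, mulVec_zero]
    obtain ⟨c, hc⟩ := exists_smul_eq_of_mulVec_eq_zero_fin_two hscalar hv hker hBker
    exact ⟨v, hv, ⟨l, hAv⟩, ⟨c, hc.symm⟩⟩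

theorem exists_common_eigenvector_of_det_commutator_eq_zero {A B : Matrix (Fin 2) (Fin 2) F}
    (h : (A * B - B * A).det = 0) :
    ∃ v : Fin 2 → F, v ≠ 0 ∧ (∃ c : F, A *ᵥ v = c • v) ∧ ∃ c : F, B *ᵥ v = c • v := by
  by_cases hcomm : A * B - B * A = 0
  · exact exists_common_eigenvector_of_commute (sub_eq_zero.mp hcomm)
  obtain ⟨v, hv, hNv⟩ := exists_mulVec_eq_zero_iff.mpr h
  have hNBv : (A * B - B * A) *ᵥ (B *ᵥ v) = 0 := by
    have hNv' : (B * A - A * B) *ᵥ v = 0 := by rw [← neg_sub, neg_mulVec, hNv, neg_zero]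
    rw [← neg_sub, neg_mulVec, commutator_mulVec_mulVec_eq_zero_fin_two B A hNv', neg_zero]
  obtain ⟨cA, hcA⟩ := exists_smul_eq_of_mulVec_eq_zero_fin_two hcomm hv hNv
    (commutator_mulVec_mulVec_eq_zero_fin_two A B hNv)
  obtain ⟨cB, hcB⟩ := exists_smul_eq_of_mulVec_eq_zero_fin_two hcomm hv hNv hNBv
  exact ⟨v, hv, ⟨cA, hcA.symm⟩, ⟨cB, hcB.symm⟩⟩

theorem exists_common_eigenvector_iff_det_commutator_eq_zero (A B : Matrix (Fin 2) (Fin 2) F) :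
    (∃ v : Fin 2 → F, v ≠ 0 ∧ (∃ c : F, A *ᵥ v = c • v) ∧ ∃ c : F, B *ᵥ v = c • v) ↔
      (A * B - B * A).det = 0 :=
  ⟨fun ⟨_, hv, ⟨_, hAv⟩, ⟨_, hBv⟩⟩ => det_commutator_eq_zero_of_common_eigenvector hv hAv hBv,
    exists_common_eigenvector_of_det_commutator_eq_zero⟩

end Matrix

section

variable {F : Type*} [Field F] [IsAlgClosed F]

open Polynomial in
theorem exists_tr_eq (a b c : F) : ∃ A B : SL2 F, tr A = a ∧ tr B = b ∧ tr (A * B) = c := by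
  have hdeg : (X ^ 2 - C c * X + 1 : F[X]).degree = 2 := by compute_degree!
  obtain ⟨x, hx⟩ := IsAlgClosed.exists_root (X ^ 2 - C c * X + 1 : F[X]) (by rw [hdeg]; decide)
  simp only [IsRoot, eval_add, eval_sub, eval_pow, eval_mul, eval_C, eval_X, eval_one] at hx
  refine ⟨⟨!![a, -1; 1, 0], by simp [det_fin_two_of]⟩,
    ⟨!![0, x; x - c, b], by simp [det_fin_two_of]; linear_combination -hx⟩, ?_, ?_, ?_⟩
  · simp [tr, trace_fin_two]
  · simp [tr, trace_fin_two]
  · change trace (!![a, -1; 1, 0] * !![0, x; x - c, b]) = c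
    simp [trace_fin_two]

theorem hasCommonEigenvector_iff (A B : SL2 F) :
    HasCommonEigenvector A B ↔
      tr A ^ 2 + tr B ^ 2 + tr (A * B) ^ 2 - tr A * tr B * tr (A * B) = 4 := by
  unfold HasCommonEigenvector eigVec
  rw [exists_common_eigenvector_iff_det_commutator_eq_zero, det_commutator_fin_two, A.det_coe,
    B.det_coe]
  simp only [tr]
  constructor <;> intro h <;> linear_combination -h

end

theorem two_generator_characters
    {F : Type*} [Field F] [IsAlgClosed F] (a b c : F) :
    (∃ A B : SL2 F, tr A = a ∧ tr B = b ∧ tr (A * B) = c) ∧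
      (∀ A B : SL2 F, tr A = a → tr B = b → tr (A * B) = c →
        (HasCommonEigenvector A B ↔ a ^ 2 + b ^ 2 + c ^ 2 - a * b * c = 4)) := by
  refine ⟨exists_tr_eq a b c, ?_⟩
  rintro A B rfl rfl rfl
  exact hasCommonEigenvector_iff A B
end

section
/- Let F be an algebraically closed field of characteristic p ≠ 2, let Γ be a group, and let ρ: Γ → SL(2,F) be an irreducible representation. For every α ∈ Γ with ρ(α) ≠ ±I, there exists γ ∈ Γ such that the restriction of ρ to the subgroup generated by α and γ is irreducible and tr(ρ(γ))² ≠ 4. -/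
open Matrix

/-!
Conjugate `ρ α` to a normal form: upper triangular, and diagonal unless it is a nontrivial
Jordan block `±[[1, u], [0, 1]]`. Its eigenlines are then among `⟨e₀⟩, ⟨e₁⟩`, and since a group is
not the union of two proper subgroups, irreducibility provides `β` with `ρ β` fixing neither line,
i.e. with both off-diagonal entries nonzero. If neither `β` nor `α β` is a suitable `γ`, then
`tr (ρ β)² = tr (ρ (α β))² = 4`.
In the Jordan block case the traces of `ρ (αᵏ β)`, `k = 0, 1, 2`, are `s, ±(s + δ), s + 2δ` with
`δ ≠ 0`, and they cannot all square to `4` when `2 ≠ 0`; so one of `β, α β, α² β` works.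
In the diagonal case the two trace conditions force the diagonal entries of `ρ β` to be nonzero,
so that `ρ (β⁻¹ α β)` again has both off-diagonal entries nonzero, while its trace is `tr (ρ α)`,
whose square is not `4` because the eigenvalues of `ρ α` differ.
-/

open Matrix.SpecialLinearGroup (coe_mul coe_inv coe_one)

section Eigenvectors

variable {F : Type*} [Field F]

local notation "↑ₘ" A:1024 => ((A : SL2 F) : Matrix (Fin 2) (Fin 2) F)

lemma eigVec_one (v : Fin 2 → F) : eigVec 1 v :=
  ⟨1, by simp⟩

lemma eigVec_mul {A B : SL2 F} {v : Fin 2 → F} (hA : eigVec A v) (hB : eigVec B v) :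
    eigVec (A * B) v := by
  obtain ⟨a, ha⟩ := hA
  obtain ⟨b, hb⟩ := hB
  exact ⟨a * b, by
    rw [coe_mul, ← mulVec_mulVec, hb, mulVec_smul, ha, smul_smul, mul_comm]⟩

lemma mulVec_inv_mulVec (P : SL2 F) (v : Fin 2 → F) : ↑ₘP⁻¹ *ᵥ (↑ₘP *ᵥ v) = v := by
  rw [mulVec_mulVec, ← coe_mul, inv_mul_cancel, coe_one, one_mulVec]

lemma mulVec_mulVec_inv (P : SL2 F) (v : Fin 2 → F) : ↑ₘP *ᵥ (↑ₘP⁻¹ *ᵥ v) = v := by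
  simpa using mulVec_inv_mulVec P⁻¹ v

lemma mulVec_ne_zero (P : SL2 F) {v : Fin 2 → F} (hv : v ≠ 0) : ↑ₘP *ᵥ v ≠ 0 := fun h ↦
  hv (by rw [← mulVec_inv_mulVec P v, h, mulVec_zero])

lemma eigVec_inv {A : SL2 F} {v : Fin 2 → F} (hA : eigVec A v) : eigVec A⁻¹ v := by
  obtain ⟨c, hc⟩ := hA
  refine ⟨c⁻¹, ?_⟩
  have hv : v = c • ↑ₘA⁻¹ *ᵥ v := by
    rw [← mulVec_smul, ← hc, mulVec_inv_mulVec]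
  rcases eq_or_ne c 0 with rfl | hc0
  · rw [hv]; simp
  · exact (eq_inv_smul_iff₀ hc0).2 hv.symm

lemma eigVec_conj_iff (P A : SL2 F) (v : Fin 2 → F) :
    eigVec (P⁻¹ * A * P) v ↔ eigVec A (↑ₘP *ᵥ v) := by
  simp only [eigVec, coe_mul, ← mulVec_mulVec]
  refine exists_congr fun c ↦ ⟨fun h ↦ ?_, fun h ↦ ?_⟩
  · rw [← mulVec_mulVec_inv P (↑ₘA *ᵥ _), h, mulVec_smul]
  · rw [h, mulVec_smul, mulVec_inv_mulVec]

lemma HasCommonEigenvector.conj {A B : SL2 F} (h : HasCommonEigenvector A B) (P : SL2 F) :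
    HasCommonEigenvector (P⁻¹ * A * P) (P⁻¹ * B * P) := by
  obtain ⟨v, hv, hA, hB⟩ := h
  refine ⟨↑ₘP⁻¹ *ᵥ v, mulVec_ne_zero _ hv, ?_, ?_⟩ <;>
    rwa [eigVec_conj_iff, mulVec_mulVec_inv]

lemma HasCommonEigenvector.of_mul_left {A B : SL2 F} (h : HasCommonEigenvector A (A * B)) :
    HasCommonEigenvector A B := by
  obtain ⟨v, hv, hA, hAB⟩ := h
  exact ⟨v, hv, hA, by simpa using eigVec_mul (eigVec_inv hA) hAB⟩

lemma eigVec_vec_one_zero_iff {A : SL2 F} : eigVec A ![1, 0] ↔ A 1 0 = 0 := by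
  refine ⟨fun ⟨c, hc⟩ ↦ by simpa using congrFun hc 1, fun h ↦ ⟨A 0 0, ?_⟩⟩
  ext i; fin_cases i <;> simp [h]

lemma eigVec_vec_zero_one_iff {A : SL2 F} : eigVec A ![0, 1] ↔ A 0 1 = 0 := by
  refine ⟨fun ⟨c, hc⟩ ↦ by simpa using congrFun hc 0, fun h ↦ ⟨A 1 1, ?_⟩⟩
  ext i; fin_cases i <;> simp [h]

lemma tr_conj (P A : SL2 F) : tr (P⁻¹ * A * P) = tr A := by
  rw [tr, coe_mul, coe_mul, trace_mul_cycle, ← coe_mul, mul_inv_cancel, coe_one, one_mul, tr]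

end Eigenvectors

section Stabilizer

variable {F Γ : Type*} [Field F] [Group Γ]

def eigenlineStabilizer (σ : Γ →* SL2 F) (v : Fin 2 → F) : Subgroup Γ where
  carrier := {g | eigVec (σ g) v}
  mul_mem' hg hh := by simpa only [Set.mem_ofPred_eq, map_mul] using eigVec_mul hg hh
  one_mem' := by simpa only [Set.mem_ofPred_eq, map_one] using eigVec_one v
  inv_mem' hg := by simpa only [Set.mem_ofPred_eq, map_inv] using eigVec_inv hg

lemma mem_eigenlineStabilizer {σ : Γ →* SL2 F} {v : Fin 2 → F} {g : Γ} :
    g ∈ eigenlineStabilizer σ v ↔ eigVec (σ g) v :=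
  Iff.rfl

lemma exists_not_eigVec_and_not_eigVec (σ : Γ →* SL2 F) {v w : Fin 2 → F}
    (hv : ∃ g, ¬ eigVec (σ g) v) (hw : ∃ g, ¬ eigVec (σ g) w) :
    ∃ g, ¬ eigVec (σ g) v ∧ ¬ eigVec (σ g) w := by
  by_contra! h
  have hcover : ((⊤ : Subgroup Γ) : Set Γ) ⊆ eigenlineStabilizer σ v ∪ eigenlineStabilizer σ w :=
    fun g _ ↦ (em (eigVec (σ g) v)).imp_right (h g)
  rcases SubgroupClass.subset_union.1 hcover with hle | hle
  · obtain ⟨g, hg⟩ := hv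
    exact hg (mem_eigenlineStabilizer.1 (hle (Subgroup.mem_top g)))
  · obtain ⟨g, hg⟩ := hw
    exact hg (mem_eigenlineStabilizer.1 (hle (Subgroup.mem_top g)))

end Stabilizer

section NormalForm

variable {F : Type*} [Field F]

/-- Normal form of a non-central element of `SL(2, F)` up to conjugacy;
`apply_zero_one_ne_zero` rules out `±1`. -/
structure IsNormalForm (N : SL2 F) : Prop where
  apply_one_zero : N 1 0 = 0
  apply_zero_one_ne_zero : N 0 0 = N 1 1 → N 0 1 ≠ 0
  apply_zero_one_eq_zero : N 0 0 ≠ N 1 1 → N 0 1 = 0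

lemma IsNormalForm.eq_zero_or_eq_zero_of_eigVec {N : SL2 F} (hN : IsNormalForm N)
    {v : Fin 2 → F} (hv : eigVec N v) : v 0 = 0 ∨ v 1 = 0 := by
  obtain ⟨c, hc⟩ := hv
  have h0 : N 0 0 * v 0 + N 0 1 * v 1 = c * v 0 := by simpa using congrFun hc 0
  have h1 : N 1 1 * v 1 = c * v 1 := by simpa [hN.apply_one_zero] using congrFun hc 1
  by_contra! ⟨hv0, hv1⟩
  obtain rfl : N 1 1 = c := mul_right_cancel₀ hv1 h1
  by_cases hd : N 0 0 = N 1 1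
  · exact mul_ne_zero (hN.apply_zero_one_ne_zero hd) hv1 (by linear_combination h0 - v 0 * hd)
  · exact hd (mul_right_cancel₀ hv0 (by linear_combination h0 - v 1 * hN.apply_zero_one_eq_zero hd))

lemma IsNormalForm.not_hasCommonEigenvector {N C : SL2 F} (hN : IsNormalForm N)
    (h10 : C 1 0 ≠ 0) (h01 : C 0 1 ≠ 0) : ¬ HasCommonEigenvector N C := by
  rintro ⟨v, hv, hNv, ⟨c, hc⟩⟩
  have h0 : C 0 0 * v 0 + C 0 1 * v 1 = c * v 0 := by simpa using congrFun hc 0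
  have h1 : C 1 0 * v 0 + C 1 1 * v 1 = c * v 1 := by simpa using congrFun hc 1
  rcases hN.eq_zero_or_eq_zero_of_eigVec hNv with h | h
  · have hv1 : v 1 ≠ 0 := fun h' ↦ hv (by ext i; fin_cases i <;> simp [h, h'])
    exact mul_ne_zero h01 hv1 (by simpa [h] using h0)
  · have hv0 : v 0 ≠ 0 := fun h' ↦ hv (by ext i; fin_cases i <;> simp [h, h'])
    exact mul_ne_zero h10 hv0 (by simpa [h] using h1)

end NormalForm

section Triangularization

variable {F : Type*} [Field F]

lemma apply_zero_zero_mul_apply_one_one {N : SL2 F} (h10 : N 1 0 = 0) : N 0 0 * N 1 1 = 1 := by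
  have h := N.prop
  rwa [det_fin_two, h10, mul_zero, sub_zero] at h

lemma exists_mulVec_vec_one_zero_eq {v : Fin 2 → F} (hv : v ≠ 0) :
    ∃ P : SL2 F, P *ᵥ ![1, 0] = v := by
  by_cases h0 : v 0 = 0
  · have h1 : v 1 ≠ 0 := fun h1 ↦ hv (by ext i; fin_cases i <;> simp [h0, h1])
    refine ⟨⟨!![v 0, -(v 1)⁻¹; v 1, 0], by simp [det_fin_two, h1]⟩, ?_⟩
    ext i; fin_cases i <;> simp
  · refine ⟨⟨!![v 0, 0; v 1, (v 0)⁻¹], by simp [det_fin_two, h0]⟩, ?_⟩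
    ext i; fin_cases i <;> simp

lemma exists_conj_apply_one_zero [IsAlgClosed F] (A : SL2 F) :
    ∃ P : SL2 F, (P⁻¹ * A * P) 1 0 = 0 := by
  obtain ⟨c, hc⟩ := Module.End.exists_eigenvalue (Matrix.toLin' (A : Matrix (Fin 2) (Fin 2) F))
  obtain ⟨v, hv⟩ := hc.exists_hasEigenvector
  obtain ⟨P, hP⟩ := exists_mulVec_vec_one_zero_eq hv.2
  refine ⟨P, eigVec_vec_one_zero_iff.1 ((eigVec_conj_iff P A _).2 ?_)⟩
  rw [hP]
  exact ⟨c, hv.apply_eq_smul⟩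

lemma exists_conj_diagonal {N : SL2 F} (h10 : N 1 0 = 0) (hd : N 0 0 ≠ N 1 1) :
    ∃ Q : SL2 F, (Q⁻¹ * N * Q) 1 0 = 0 ∧ (Q⁻¹ * N * Q) 0 1 = 0 ∧
      (Q⁻¹ * N * Q) 0 0 = N 0 0 ∧ (Q⁻¹ * N * Q) 1 1 = N 1 1 := by
  have hd' : N 1 1 - N 0 0 ≠ 0 := sub_ne_zero.2 hd.symm
  obtain ⟨Q, hQ⟩ : ∃ Q : SL2 F,
      (Q : Matrix (Fin 2) (Fin 2) F) = !![1, N 0 1 / (N 1 1 - N 0 0); 0, 1] :=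
    ⟨⟨_, by simp⟩, rfl⟩
  refine ⟨Q, ?_⟩
  rw [coe_mul, coe_mul, coe_inv, hQ, adjugate_fin_two, eta_fin_two (N : Matrix (Fin 2) (Fin 2) F)]
  simp [h10]
  field_simp
  ring

lemma coe_eq_one_or_eq_neg_one_of_conj {P A : SL2 F} (h10 : (P⁻¹ * A * P) 1 0 = 0)
    (h01 : (P⁻¹ * A * P) 0 1 = 0) (hd : (P⁻¹ * A * P) 0 0 = (P⁻¹ * A * P) 1 1) :
    (A : Matrix (Fin 2) (Fin 2) F) = 1 ∨ (A : Matrix (Fin 2) (Fin 2) F) = -1 := by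
  have hdet := apply_zero_zero_mul_apply_one_one h10
  rw [← hd] at hdet
  set ε := (P⁻¹ * A * P) 0 0
  have hN : ((P⁻¹ * A * P : SL2 F) : Matrix (Fin 2) (Fin 2) F) = ε • 1 := by
    ext i j; fin_cases i <;> fin_cases j <;> simp [h10, h01, hd, ε]
  have hA : (A : Matrix (Fin 2) (Fin 2) F) = ε • 1 := by
    rw [show A = P * (P⁻¹ * A * P) * P⁻¹ by group, coe_mul, coe_mul, hN, mul_smul_one,
      smul_mul_assoc, ← coe_mul, mul_inv_cancel, coe_one]
  rcases mul_self_eq_one_iff.1 hdet with h | h <;> simp [hA, h]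

theorem exists_conj_isNormalForm [IsAlgClosed F] {A : SL2 F}
    (h1 : (A : Matrix (Fin 2) (Fin 2) F) ≠ 1) (h2 : (A : Matrix (Fin 2) (Fin 2) F) ≠ -1) :
    ∃ P : SL2 F, IsNormalForm (P⁻¹ * A * P) := by
  obtain ⟨P, hP⟩ := exists_conj_apply_one_zero A
  by_cases hd : (P⁻¹ * A * P) 0 0 = (P⁻¹ * A * P) 1 1
  · refine ⟨P, ⟨hP, fun _ h01 ↦ ?_, fun h ↦ absurd hd h⟩⟩
    rcases coe_eq_one_or_eq_neg_one_of_conj hP h01 hd with h | h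
    exacts [h1 h, h2 h]
  · obtain ⟨Q, h10, h01, h00, h11⟩ := exists_conj_diagonal hP hd
    have hPQ : (P * Q)⁻¹ * A * (P * Q) = Q⁻¹ * (P⁻¹ * A * P) * Q := by group
    exact ⟨P * Q, by rw [hPQ]; exact ⟨h10, fun h ↦ absurd (h00 ▸ h11 ▸ h) hd, fun _ ↦ h01⟩⟩

end Triangularization

section Partner

variable {F : Type*} [Field F]

lemma sq_add_two_mul_ne_four (h2 : (2 : F) ≠ 0) {s δ : F} (hδ : δ ≠ 0) (h0 : s ^ 2 = 4)
    (h1 : (s + δ) ^ 2 = 4) : (s + 2 * δ) ^ 2 ≠ 4 := by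
  intro h
  have hδs : δ = -2 * s := by
    have : δ * (2 * s + δ) = 0 := by linear_combination h1 - h0
    linear_combination (mul_eq_zero.1 this).resolve_left hδ
  rw [hδs] at h
  exact pow_ne_zero 5 h2 (by linear_combination h - 9 * h0)

lemma ne_zero_of_sq_eq_four (h2 : (2 : F) ≠ 0) {x y a d : F} (hxy : x * y = 1) (hne : x ≠ y)
    (h0 : (a + d) ^ 2 = 4) (h1 : (x * a + y * d) ^ 2 = 4) : a ≠ 0 := by
  rintro rfl
  have hd : d ^ 2 ≠ 0 := by
    rw [show d ^ 2 = 2 * 2 by linear_combination h0]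
    exact mul_ne_zero h2 h2
  have hy : y ^ 2 = 1 := mul_right_cancel₀ hd (by linear_combination h1 - h0)
  exact hne (by linear_combination y * hxy - x * hy)

lemma tr_eq_apply_add_apply (A : SL2 F) : tr A = A 0 0 + A 1 1 :=
  trace_fin_two _

lemma tr_mul_sq_of_parabolic {N : SL2 F} (h10 : N 1 0 = 0) (hd : N 0 0 = N 1 1) (B : SL2 F) :
    tr (N * B) ^ 2 = (tr B + N 0 0 * N 0 1 * B 1 0) ^ 2 := by
  have hdet := apply_zero_zero_mul_apply_one_one h10
  simp only [tr_eq_apply_add_apply, coe_mul, mul_apply, Fin.sum_univ_two, h10, ← hd] at hdet ⊢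
  linear_combination ((B 0 0 + B 1 1) ^ 2 - (N 0 1 * B 1 0) ^ 2) * hdet

lemma tr_mul_mul_of_parabolic {N : SL2 F} (h10 : N 1 0 = 0) (hd : N 0 0 = N 1 1) (B : SL2 F) :
    tr (N * (N * B)) = tr B + 2 * (N 0 0 * N 0 1 * B 1 0) := by
  have hdet := apply_zero_zero_mul_apply_one_one h10
  simp only [tr_eq_apply_add_apply, coe_mul, mul_apply, Fin.sum_univ_two, h10, ← hd] at hdet ⊢
  linear_combination (B 0 0 + B 1 1) * hdet

lemma tr_mul_of_diagonal {N : SL2 F} (h10 : N 1 0 = 0) (h01 : N 0 1 = 0) (B : SL2 F) :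
    tr (N * B) = N 0 0 * B 0 0 + N 1 1 * B 1 1 := by
  simp [tr_eq_apply_add_apply, mul_apply, Fin.sum_univ_two, h10, h01]

lemma conj_apply_one_zero_of_diagonal {N : SL2 F} (h10 : N 1 0 = 0) (h01 : N 0 1 = 0) (B : SL2 F) :
    (B⁻¹ * N * B) 1 0 = B 0 0 * B 1 0 * (N 1 1 - N 0 0) := by
  simp [coe_inv, adjugate_fin_two, mul_apply, vecMul, dotProduct, Fin.sum_univ_two, h10, h01]
  ring

lemma conj_apply_zero_one_of_diagonal {N : SL2 F} (h10 : N 1 0 = 0) (h01 : N 0 1 = 0) (B : SL2 F) :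
    (B⁻¹ * N * B) 0 1 = B 0 1 * B 1 1 * (N 0 0 - N 1 1) := by
  simp [coe_inv, adjugate_fin_two, mul_apply, vecMul, dotProduct, Fin.sum_univ_two, h10, h01]
  ring

variable {Γ : Type*} [Group Γ]

lemma exists_partner_of_parabolic (h2 : (2 : F) ≠ 0) (σ : Γ →* SL2 F) {α β : Γ}
    (hN : IsNormalForm (σ α)) (hd : σ α 0 0 = σ α 1 1)
    (hβ10 : σ β 1 0 ≠ 0) (hβ01 : σ β 0 1 ≠ 0) :
    ∃ γ, ¬ HasCommonEigenvector (σ α) (σ γ) ∧ tr (σ γ) ^ 2 ≠ 4 := by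
  have hB : ¬ HasCommonEigenvector (σ α) (σ β) := hN.not_hasCommonEigenvector hβ10 hβ01
  have hNB : ¬ HasCommonEigenvector (σ α) (σ (α * β)) := by
    rw [map_mul]; exact fun h ↦ hB h.of_mul_left
  have hNNB : ¬ HasCommonEigenvector (σ α) (σ (α * (α * β))) := by
    rw [map_mul]; exact fun h ↦ hNB h.of_mul_left
  have hε : σ α 0 0 ≠ 0 :=
    left_ne_zero_of_mul_eq_one (apply_zero_zero_mul_apply_one_one hN.apply_one_zero)
  have hδ : σ α 0 0 * σ α 0 1 * σ β 1 0 ≠ 0 :=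
    mul_ne_zero (mul_ne_zero hε (hN.apply_zero_one_ne_zero hd)) hβ10
  by_contra! hall
  refine sq_add_two_mul_ne_four h2 hδ (hall β hB) ?_ ?_
  · rw [← tr_mul_sq_of_parabolic hN.apply_one_zero hd, ← map_mul]
    exact hall _ hNB
  · rw [← tr_mul_mul_of_parabolic hN.apply_one_zero hd, ← map_mul, ← map_mul]
    exact hall _ hNNB

lemma exists_partner_of_diagonal (h2 : (2 : F) ≠ 0) (σ : Γ →* SL2 F) {α β : Γ}
    (hN : IsNormalForm (σ α)) (hd : σ α 0 0 ≠ σ α 1 1)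
    (hβ10 : σ β 1 0 ≠ 0) (hβ01 : σ β 0 1 ≠ 0) :
    ∃ γ, ¬ HasCommonEigenvector (σ α) (σ γ) ∧ tr (σ γ) ^ 2 ≠ 4 := by
  have hN10 := hN.apply_one_zero
  have hN01 := hN.apply_zero_one_eq_zero hd
  have hdet := apply_zero_zero_mul_apply_one_one hN10
  have hB : ¬ HasCommonEigenvector (σ α) (σ β) := hN.not_hasCommonEigenvector hβ10 hβ01
  have hNB : ¬ HasCommonEigenvector (σ α) (σ (α * β)) := by
    rw [map_mul]; exact fun h ↦ hB h.of_mul_left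
  by_contra! hall
  have htrB : (σ β 0 0 + σ β 1 1) ^ 2 = 4 := tr_eq_apply_add_apply (σ β) ▸ hall β hB
  have htrNB : (σ α 0 0 * σ β 0 0 + σ α 1 1 * σ β 1 1) ^ 2 = 4 := by
    rw [← tr_mul_of_diagonal hN10 hN01, ← map_mul]
    exact hall _ hNB
  have hβ00 : σ β 0 0 ≠ 0 := ne_zero_of_sq_eq_four h2 hdet hd htrB htrNB
  have hβ11 : σ β 1 1 ≠ 0 := ne_zero_of_sq_eq_four h2 (by rw [mul_comm, hdet]) (Ne.symm hd)
    (by rw [add_comm, htrB]) (by rw [add_comm, htrNB])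
  have hC : ¬ HasCommonEigenvector (σ α) (σ (β⁻¹ * α * β)) := by
    rw [map_mul, map_mul, map_inv]
    refine hN.not_hasCommonEigenvector ?_ ?_
    · rw [conj_apply_one_zero_of_diagonal hN10 hN01]
      exact mul_ne_zero (mul_ne_zero hβ00 hβ10) (sub_ne_zero.2 (Ne.symm hd))
    · rw [conj_apply_zero_one_of_diagonal hN10 hN01]
      exact mul_ne_zero (mul_ne_zero hβ01 hβ11) (sub_ne_zero.2 hd)
  have htrC := hall _ hC
  rw [map_mul, map_mul, map_inv, tr_conj, tr_eq_apply_add_apply] at htrC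
  have hsq : (σ α 0 0 - σ α 1 1) ^ 2 = 0 := by linear_combination htrC - 4 * hdet
  exact hd (sub_eq_zero.1 (pow_eq_zero_iff two_ne_zero |>.1 hsq))

end Partner

theorem exists_irreducible_partner_trace_ne_four
    {F : Type*} [Field F] [IsAlgClosed F] (h2 : (2 : F) ≠ 0)
    {Γ : Type*} [Group Γ] (ρ : Γ →* SL2 F)
    (hirr : ¬ ∃ v : Fin 2 → F, v ≠ 0 ∧ ∀ g : Γ, eigVec (ρ g) v)
    (α : Γ) (hα1 : (ρ α : Matrix (Fin 2) (Fin 2) F) ≠ 1)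
    (hα2 : (ρ α : Matrix (Fin 2) (Fin 2) F) ≠ -1) :
    ∃ γ : Γ,
      (¬ ∃ v : Fin 2 → F, v ≠ 0 ∧
        ∀ g ∈ Subgroup.closure ({α, γ} : Set Γ), eigVec (ρ g) v) ∧
      (tr (ρ γ)) ^ 2 ≠ 4 := by
  obtain ⟨P, hN⟩ := exists_conj_isNormalForm hα1 hα2
  let σ : Γ →* SL2 F := (MulAut.conj P⁻¹).toMonoidHom.comp ρ
  have hσ (g : Γ) : σ g = P⁻¹ * ρ g * P := by simp [σ]
  have hσirr (v : Fin 2 → F) (hv : v ≠ 0) : ∃ g, ¬ eigVec (σ g) v := by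
    by_contra! h
    exact hirr ⟨_, mulVec_ne_zero P hv, fun g ↦ (eigVec_conj_iff P (ρ g) v).1 (hσ g ▸ h g)⟩
  obtain ⟨β, hβ10, hβ01⟩ := exists_not_eigVec_and_not_eigVec σ
    (hσirr ![1, 0] (by simp)) (hσirr ![0, 1] (by simp))
  rw [eigVec_vec_one_zero_iff] at hβ10
  rw [eigVec_vec_zero_one_iff] at hβ01
  rw [← hσ] at hN
  obtain ⟨γ, hcommon, htr⟩ : ∃ γ, ¬ HasCommonEigenvector (σ α) (σ γ) ∧ tr (σ γ) ^ 2 ≠ 4 := by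
    by_cases hd : σ α 0 0 = σ α 1 1
    exacts [exists_partner_of_parabolic h2 σ hN hd hβ10 hβ01,
      exists_partner_of_diagonal h2 σ hN hd hβ10 hβ01]
  refine ⟨γ, fun ⟨v, hv, hall⟩ ↦ hcommon ?_, by rwa [hσ, tr_conj] at htr⟩
  rw [hσ, hσ]
  exact HasCommonEigenvector.conj ⟨v, hv, hall α (Subgroup.subset_closure (by simp)),
    hall γ (Subgroup.subset_closure (by simp))⟩ P
end
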